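/- Let f be a Fibonacci map. Suppose positive integers m and m′ have Fibonacci sum expressions with leading (smallest-index) summands S_n and S_{n′} respectively. Then: (i) if n ≡ 1 or 2 (mod 4) then c_m < c, and if n ≡ 0 or 3 (mod 4) then c_m > c; (ii) if n < n′ and both n, n′ are ≡ 1 or 2 (mod 4), then c_m < c_{m′} < c; (iii) if n < n′ and both n, n′ are ≡ 0 or 3 (mod 4), then c < c_{m′} < c_m. (Here S_0 corresponds to residue 0.) -/

import Mathlib

noncomputable section

/-- The Fibonacci numbers `S 0 = 1`, `S 1 = 2`, `S (k+2) = S (k+1) + S k`. -/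
def fibS : ℕ → ℕ
  | 0 => 1
  | 1 => 2
  | n + 2 => fibS (n + 1) + fibS n

/-- `f : [0,1] → [0,1]` is unimodal with critical point `c`: continuous, maps `[0,1]` into
itself, `f 0 = f 1 = 0`, `c ∈ (0,1)`, strictly increasing on `[0,c]`, strictly decreasing
on `[c,1]`. -/
def IsUnimodal (f : ℝ → ℝ) (c : ℝ) : Prop :=
  ContinuousOn f (Set.Icc 0 1) ∧ Set.MapsTo f (Set.Icc 0 1) (Set.Icc 0 1) ∧
  f 0 = 0 ∧ f 1 = 0 ∧ c ∈ Set.Ioo (0 : ℝ) 1 ∧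
  StrictMonoOn f (Set.Icc 0 c) ∧ StrictAntiOn f (Set.Icc c 1)

/-- `f` is symmetric about `c`: `f (2c - x) = f x` whenever both points lie in `[0,1]`
(the symmetric point of `x` is `x̂ = 2c - x`). -/
def SymmetricAbout (f : ℝ → ℝ) (c : ℝ) : Prop :=
  ∀ x ∈ Set.Icc (0 : ℝ) 1, 2 * c - x ∈ Set.Icc (0 : ℝ) 1 → f (2 * c - x) = f x

/-- The distance from `c` to a nearest `k`-th preimage `c₋ₖ` of `c` in `[0,1]`,
i.e. `|c₋ₖ - c| = |c₋ₖ|`. -/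
def preimDist (f : ℝ → ℝ) (c : ℝ) (k : ℕ) : ℝ :=
  sInf ((fun x => |x - c|) '' {x | x ∈ Set.Icc (0 : ℝ) 1 ∧ f^[k] x = c})

/-- `S` is the sequence of cutting times of `f`: `S 0 = 1`, and `S (i+1)` is the least
`k ≥ S i` for which the nearest `k`-th preimage `c₋ₖ` of `c` lies in the symmetric open
interval `(c₋ₛᵢ, (c₋ₛᵢ)^)`, i.e. `c₋ₖ` exists and is strictly closer to `c` than `c₋ₛᵢ`. -/
def IsCuttingSeq (f : ℝ → ℝ) (c : ℝ) (S : ℕ → ℕ) : Prop :=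
  S 0 = 1 ∧ ∀ i, IsLeast {k | S i ≤ k ∧
    ({x | x ∈ Set.Icc (0 : ℝ) 1 ∧ f^[k] x = c}).Nonempty ∧
    preimDist f c k < preimDist f c (S i)} (S (i + 1))

/-- A Fibonacci map: a symmetric unimodal map whose cutting times are exactly the
Fibonacci numbers `1, 2, 3, 5, 8, …`. -/
def IsFibonacciMap (f : ℝ → ℝ) (c : ℝ) : Prop :=
  IsUnimodal f c ∧ SymmetricAbout f c ∧ IsCuttingSeq f c fibS

/-- `l` is the Fibonacci sum expression of `m`: a nonempty list of indices
`k₁, k₂, …` with `k_{i+1} ≥ k_i + 2` for each `i`, with `S_{k₁} + S_{k₂} + ⋯ = m`.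
The leading summand is `fibS n` where `l.head? = some n`. -/
def IsFibExpansion (l : List ℕ) (m : ℕ) : Prop :=
  l ≠ [] ∧ l.Chain' (fun a b => a + 2 ≤ b) ∧ (l.map fibS).sum = m

/-!
Write `δ k` for the distance from `c` to a closest preimage of `c` of order `S_k`. Minimality
of the cutting times says that no preimage of order `0 < j < S_{k+1}` is closer to `c` than
`δ k`, so `f^j` is strictly monotone on `[c, c + δ k]` for `j ≤ S_{k+1}`, and by symmetry
`f^{S_k} (c + δ k) = c`. Together with `S_{k+2} = S_k + S_{k+1}` and the intermediate value
theorem this gives `|c_{S_{k+2}} - c| < δ k < |c_{S_{k+1}} - c|`, and the closest returns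
`c_{S_k}` change side as `k ↦ k + 2`.

If `m = S_n + m₂` is a Fibonacci sum expression, symmetry gives
`c_m = f^{S_n} (c + |c_{m₂} - c|)` with `|c_{m₂} - c| ≤ |c_{S_{n+2}} - c| < δ n`, so
monotonicity of `f^{S_n}` on `[c, c + δ n]`, which sends the right end point to `c`, places
`c_m` between `c_{S_n + S_{n+2}}` and `c_{S_n}`. The ordering then follows from
`|c_{S_{n+1}} - c| < |c_{S_n + S_{n+2}} - c|` for `n ≥ 1`, proved by induction on `n` starting
from `δ 1 < |c_4 - c|`.
-/

open Set Function

theorem fibS_pos : ∀ n, 0 < fibS n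
  | 0 => one_pos
  | 1 => two_pos
  | n + 2 => Nat.add_pos_left (fibS_pos (n + 1)) _

theorem fibS_lt_fibS_succ : ∀ n, fibS n < fibS (n + 1)
  | 0 => by decide
  | n + 1 => Nat.lt_add_of_pos_right (fibS_pos n)

theorem fibS_add_two (n : ℕ) : fibS (n + 2) = fibS n + fibS (n + 1) :=
  Nat.add_comm _ _

section IntervalMaps

variable {g : ℝ → ℝ} {a b c : ℝ}

theorem forall_le_or_forall_ge_of_forall_ne (hg : ContinuousOn g (Icc a b))
    (hne : ∀ x ∈ Ioo a b, g x ≠ c) : (∀ x ∈ Icc a b, g x ≤ c) ∨ ∀ x ∈ Icc a b, c ≤ g x := by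
  by_contra! h
  obtain ⟨⟨x, hx, hgx⟩, y, hy, hgy⟩ := h
  obtain ⟨z, hz, hgz⟩ : ∃ z ∈ Ioo (min x y) (max x y), g z = c := by
    rcases le_total x y with hxy | hyx
    · rw [min_eq_left hxy, max_eq_right hxy]
      exact intermediate_value_Ioo' hxy (hg.mono (Icc_subset_Icc hx.1 hy.2)) ⟨hgy, hgx⟩
    · rw [min_eq_right hyx, max_eq_left hyx]
      exact intermediate_value_Ioo hyx (hg.mono (Icc_subset_Icc hy.1 hx.2)) ⟨hgy, hgx⟩
  exact hne z ⟨(le_min hx.1 hy.1).trans_lt hz.1, hz.2.trans_le (max_le hx.2 hy.2)⟩ hgz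

theorem exists_mem_Icc_abs_sub_eq (hab : a ≤ b) (hg : ContinuousOn g (Icc a b)) (hgb : g b = c)
    {d : ℝ} (hd : 0 ≤ d) (hda : d ≤ |g a - c|) : ∃ x ∈ Icc a b, |g x - c| = d :=
  intermediate_value_Icc' hab (continuous_abs.comp_continuousOn (hg.sub continuousOn_const))
    ⟨by simpa [hgb] using hd, hda⟩

def StrictMonoOrAntiOn (g : ℝ → ℝ) (s : Set ℝ) : Prop :=
  StrictMonoOn g s ∨ StrictAntiOn g s

namespace StrictMonoOrAntiOn

variable {e x z : ℝ}

theorem injOn (hg : StrictMonoOrAntiOn g (Icc a b)) : InjOn g (Icc a b) :=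
  hg.elim StrictMonoOn.injOn StrictAntiOn.injOn

theorem abs_sub_lt (hg : StrictMonoOrAntiOn g (Icc a b)) (hge : g e = c)
    (hax : a ≤ x) (hxz : x < z) (hze : z ≤ e) (heb : e ≤ b) :
    |g z - c| < |g x - c| := by
  have hx : x ∈ Icc a b := ⟨hax, by linarith⟩
  have hz : z ∈ Icc a b := ⟨by linarith, by linarith⟩
  have he : e ∈ Icc a b := ⟨by linarith, heb⟩
  rcases hg with hg | hg
  · have := hg hx hz hxz
    have := hg.monotoneOn hz he hze
    rw [abs_of_nonpos (by linarith), abs_of_nonpos (by linarith)]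
    linarith
  · have := hg hx hz hxz
    have := hg.antitoneOn hz he hze
    rw [abs_of_nonneg (by linarith), abs_of_nonneg (by linarith)]
    linarith

theorem abs_sub_le (hg : StrictMonoOrAntiOn g (Icc a b)) (hge : g e = c)
    (hax : a ≤ x) (hxz : x ≤ z) (hze : z ≤ e) (heb : e ≤ b) :
    |g z - c| ≤ |g x - c| := by
  rcases hxz.lt_or_eq with hxz | rfl
  exacts [(hg.abs_sub_lt hge hax hxz hze heb).le, le_rfl]

theorem sign_sub_eq (hg : StrictMonoOrAntiOn g (Icc a b)) (hge : g e = c)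
    (hax : a ≤ x) (hxe : x < e) (heb : e ≤ b) :
    SignType.sign (g x - c) = SignType.sign (g a - c) := by
  have ha : a ∈ Icc a b := ⟨le_rfl, by linarith⟩
  have hx : x ∈ Icc a b := ⟨hax, by linarith⟩
  have he : e ∈ Icc a b := ⟨by linarith, heb⟩
  rcases hg with hg | hg
  · have := hg.monotoneOn ha hx hax
    have := hg hx he hxe
    rw [sign_neg (by linarith), sign_neg (by linarith)]
  · have := hg.antitoneOn ha hx hax
    have := hg hx he hxe
    rw [sign_pos (by linarith), sign_pos (by linarith)]

theorem sign_sub_eq_neg (hg : StrictMonoOrAntiOn g (Icc a b)) (hge : g e = c)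
    (hae : a < e) (hez : e < z) (hzb : z ≤ b) :
    SignType.sign (g z - c) = -SignType.sign (g a - c) := by
  have ha : a ∈ Icc a b := ⟨le_rfl, by linarith⟩
  have hz : z ∈ Icc a b := ⟨by linarith, hzb⟩
  have he : e ∈ Icc a b := ⟨hae.le, by linarith⟩
  rcases hg with hg | hg
  · have := hg ha he hae
    have := hg he hz hez
    rw [sign_pos (by linarith), sign_neg (by linarith), neg_neg]
  · have := hg ha he hae
    have := hg he hz hez
    rw [sign_neg (by linarith), sign_pos (by linarith)]

end StrictMonoOrAntiOn

end IntervalMaps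

section Preimages

variable {f : ℝ → ℝ} {c : ℝ}

theorem preimDist_nonneg (f : ℝ → ℝ) (c : ℝ) (k : ℕ) : 0 ≤ preimDist f c k :=
  Real.sInf_nonneg (by rintro _ ⟨x, -, rfl⟩; exact abs_nonneg _)

theorem preimDist_le {k : ℕ} {x : ℝ} (hx : x ∈ Icc (0 : ℝ) 1) (hfx : f^[k] x = c) :
    preimDist f c k ≤ |x - c| :=
  csInf_le ⟨0, by rintro _ ⟨y, -, rfl⟩; exact abs_nonneg _⟩ ⟨x, ⟨hx, hfx⟩, rfl⟩

theorem exists_abs_sub_eq_preimDist (hf : ContinuousOn f (Icc 0 1))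
    (hmaps : MapsTo f (Icc 0 1) (Icc 0 1)) {k : ℕ} (hne : ∃ x ∈ Icc (0 : ℝ) 1, f^[k] x = c) :
    ∃ x ∈ Icc (0 : ℝ) 1, f^[k] x = c ∧ |x - c| = preimDist f c k := by
  have hcpt : IsCompact {x | x ∈ Icc (0 : ℝ) 1 ∧ f^[k] x = c} :=
    isCompact_Icc.of_isClosed_subset
      ((hf.iterate hmaps k).preimage_isClosed_of_isClosed isClosed_Icc isClosed_singleton)
      fun _ hx => hx.1
  have hne' : {x | x ∈ Icc (0 : ℝ) 1 ∧ f^[k] x = c}.Nonempty := hne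
  obtain ⟨x, hx, hxd⟩ :=
    (hcpt.image (continuous_abs.comp (continuous_sub_right c))).sInf_mem (hne'.image _)
  exact ⟨x, hx.1, hx.2, hxd⟩

end Preimages

namespace IsCuttingSeq

variable {f : ℝ → ℝ} {c : ℝ} {S : ℕ → ℕ}

theorem preimDist_succ_lt (hS : IsCuttingSeq f c S) (i : ℕ) :
    preimDist f c (S (i + 1)) < preimDist f c (S i) :=
  (hS.2 i).1.2.2

theorem strictAnti (hS : IsCuttingSeq f c S) : StrictAnti fun i => preimDist f c (S i) :=
  strictAnti_nat_of_succ_lt hS.preimDist_succ_lt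

theorem strictMono (hS : IsCuttingSeq f c S) : StrictMono S :=
  strictMono_nat_of_lt_succ fun i =>
    (hS.2 i).1.1.lt_of_ne fun h => (hS.preimDist_succ_lt i).ne (by rw [h])

theorem preimDist_pos (hS : IsCuttingSeq f c S) (i : ℕ) : 0 < preimDist f c (S i) :=
  (preimDist_nonneg f c _).trans_lt (hS.preimDist_succ_lt i)

-- `sInf ∅ = 0`, so a positive `preimDist` forces preimages to exist.
theorem exists_preimage (hS : IsCuttingSeq f c S) (i : ℕ) :
    ∃ x ∈ Icc (0 : ℝ) 1, f^[S i] x = c := by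
  by_contra! h
  have hempty : {x | x ∈ Icc (0 : ℝ) 1 ∧ f^[S i] x = c} = ∅ :=
    eq_empty_of_forall_notMem fun x hx => h x hx.1 hx.2
  have hpos := hS.preimDist_pos i
  rw [preimDist, hempty, image_empty, Real.sInf_empty] at hpos
  exact hpos.false

theorem preimDist_le_abs_sub (hS : IsCuttingSeq f c S) {j k : ℕ} (hj : j ≠ 0) (hjk : j < S (k + 1))
    {x : ℝ} (hx : x ∈ Icc (0 : ℝ) 1) (hfx : f^[j] x = c) : preimDist f c (S k) ≤ |x - c| := by
  obtain ⟨i, hSi, hSi'⟩ := hS.strictMono.exists_between_of_tendsto_atTop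
    hS.strictMono.tendsto_atTop (x := j + 1) (by rw [hS.1]; omega)
  have hik : i ≤ k :=
    Nat.lt_succ_iff.mp (hS.strictMono.lt_iff_lt.mp (show S i < S (k + 1) by omega))
  have hij : preimDist f c (S i) ≤ preimDist f c j := by
    by_contra! hlt
    have := (hS.2 i).2 ⟨by omega, ⟨x, hx, hfx⟩, hlt⟩
    omega
  calc preimDist f c (S k) ≤ preimDist f c (S i) := hS.strictAnti.antitone hik
    _ ≤ preimDist f c j := hij
    _ ≤ |x - c| := preimDist_le hx hfx

theorem iterate_ne (hS : IsCuttingSeq f c S) (hc : c ∈ Icc (0 : ℝ) 1) {N : ℕ} (hN : N ≠ 0) :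
    f^[N] c ≠ c := fun h => by
  have := hS.preimDist_le_abs_sub hN (N.lt_succ_self.trans_le (hS.strictMono.id_le _)) hc h
  rw [sub_self, abs_zero] at this
  exact (hS.preimDist_pos N).not_ge this

end IsCuttingSeq

namespace IsUnimodal

variable {f : ℝ → ℝ} {c : ℝ}

theorem crit_mem (hf : IsUnimodal f c) : c ∈ Icc (0 : ℝ) 1 :=
  Ioo_subset_Icc_self hf.2.2.2.2.1

theorem mapsTo_iterate (hf : IsUnimodal f c) (j : ℕ) : MapsTo f^[j] (Icc 0 1) (Icc 0 1) :=
  hf.2.1.iterate j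

theorem continuousOn_iterate (hf : IsUnimodal f c) (j : ℕ) : ContinuousOn f^[j] (Icc 0 1) :=
  hf.1.iterate hf.2.1 j

theorem apply_lt_apply_crit (hf : IsUnimodal f c) {x : ℝ} (hx : x ∈ Icc (0 : ℝ) 1)
    (hxc : x ≠ c) : f x < f c := by
  obtain ⟨-, -, -, -, ⟨hc0, hc1⟩, hmono, hanti⟩ := hf
  rcases hxc.lt_or_gt with h | h
  · exact hmono ⟨hx.1, h.le⟩ ⟨hc0.le, le_rfl⟩ h
  · exact hanti ⟨le_rfl, hc1.le⟩ ⟨h.le, hx.2⟩ h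

theorem exists_gt_apply_eq (hf : IsUnimodal f c) (hc : c < f c) : ∃ z, c < z ∧ z ≤ 1 ∧ f z = c := by
  obtain ⟨hcont, -, -, h1, ⟨hc0, hc1⟩, -, -⟩ := hf
  obtain ⟨z, hz, hfz⟩ := intermediate_value_Icc' hc1.le (hcont.mono (Icc_subset_Icc hc0.le le_rfl))
    (⟨h1 ▸ hc0.le, hc.le⟩ : c ∈ Icc (f 1) (f c))
  exact ⟨z, hz.1.lt_of_ne fun h => by subst h; exact hc.ne' hfz, hz.2, hfz⟩

theorem strictMonoOrAntiOn_iterate (hf : IsUnimodal f c) {a b : ℝ} (ha : 0 ≤ a) (hb : b ≤ 1)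
    {j : ℕ} (hj : ∀ i < j, ∀ x ∈ Ioo a b, f^[i] x ≠ c) : StrictMonoOrAntiOn f^[j] (Icc a b) := by
  induction j with
  | zero => exact Or.inl strictMonoOn_id
  | succ j ih =>
    have hsub : Icc a b ⊆ Icc 0 1 := Icc_subset_Icc ha hb
    have hmaps : MapsTo f^[j] (Icc a b) (Icc 0 1) := (hf.mapsTo_iterate j).mono_left hsub
    have hside := forall_le_or_forall_ge_of_forall_ne ((hf.continuousOn_iterate j).mono hsub)
      (hj j j.lt_succ_self)
    obtain ⟨-, -, -, -, -, hmono, hanti⟩ := hf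
    rw [iterate_succ']
    rcases ih fun i hi => hj i (by omega) with hg | hg <;> rcases hside with hs | hs
    · exact Or.inl (hmono.comp hg fun x hx => ⟨(hmaps hx).1, hs x hx⟩)
    · exact Or.inr (hanti.comp_strictMonoOn hg fun x hx => ⟨hs x hx, (hmaps hx).2⟩)
    · exact Or.inr (hmono.comp_strictAntiOn hg fun x hx => ⟨(hmaps hx).1, hs x hx⟩)
    · exact Or.inl (hanti.comp hg fun x hx => ⟨hs x hx, (hmaps hx).2⟩)

end IsUnimodal

theorem SymmetricAbout.iterate {f : ℝ → ℝ} {c : ℝ} (hs : SymmetricAbout f c) {x : ℝ}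
    (hx : x ∈ Icc (0 : ℝ) 1) (hx' : 2 * c - x ∈ Icc (0 : ℝ) 1) {j : ℕ} (hj : j ≠ 0) :
    f^[j] (2 * c - x) = f^[j] x := by
  obtain ⟨j, rfl⟩ := Nat.exists_eq_succ_of_ne_zero hj
  rw [iterate_succ_apply, iterate_succ_apply, hs x hx hx']

namespace IsFibonacciMap

variable {f : ℝ → ℝ} {c : ℝ}

local notation "δ" k:max => preimDist f c (fibS k)

theorem preimDist_pos (hf : IsFibonacciMap f c) (k : ℕ) : 0 < δ k :=
  hf.2.2.preimDist_pos k

theorem preimDist_succ_lt (hf : IsFibonacciMap f c) (k : ℕ) : δ (k + 1) < δ k :=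
  hf.2.2.preimDist_succ_lt k

theorem preimDist_le_preimDist (hf : IsFibonacciMap f c) {k l : ℕ} (h : k ≤ l) : δ l ≤ δ k :=
  hf.2.2.strictAnti.antitone h

theorem crit_lt_apply (hf : IsFibonacciMap f c) : c < f c := by
  obtain ⟨z, hz, hfz⟩ := hf.2.2.exists_preimage 0
  have hfz : f z = c := hfz
  have hzc : z ≠ c := by
    rintro rfl
    exact hf.2.2.iterate_ne hf.1.crit_mem one_ne_zero hfz
  exact hfz ▸ hf.1.apply_lt_apply_crit hz hzc

theorem Icc_add_preimDist_subset (hf : IsFibonacciMap f c) (k : ℕ) :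
    Icc c (c + δ k) ⊆ Icc 0 1 := by
  obtain ⟨z, hcz, hz1, hfz⟩ := hf.1.exists_gt_apply_eq hf.crit_lt_apply
  have hδz := preimDist_le (k := fibS 0) ⟨hf.1.crit_mem.1.trans hcz.le, hz1⟩ hfz
  rw [abs_of_pos (sub_pos.2 hcz)] at hδz
  have := hf.preimDist_le_preimDist (Nat.zero_le k)
  exact Icc_subset_Icc hf.1.crit_mem.1 (by linarith)

theorem iterate_add_abs_sub (hf : IsFibonacciMap f c) {x : ℝ} (hx : x ∈ Icc (0 : ℝ) 1)
    (hxc : |x - c| ≤ δ 0) {j : ℕ} (hj : j ≠ 0) : f^[j] (c + |x - c|) = f^[j] x := by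
  rcases le_or_gt c x with h | h
  · rw [abs_of_nonneg (sub_nonneg.2 h), add_sub_cancel]
  · rw [abs_of_neg (sub_neg.2 h)] at hxc ⊢
    rw [show c + -(x - c) = 2 * c - x by ring]
    exact hf.2.1.iterate hx (hf.Icc_add_preimDist_subset 0 ⟨by linarith, by linarith⟩) hj

theorem iterate_add_abs_iterate_sub (hf : IsFibonacciMap f c) {j m : ℕ}
    (hm : |f^[m] c - c| ≤ δ 0) (hj : j ≠ 0) : f^[j] (c + |f^[m] c - c|) = f^[j + m] c := by
  rw [hf.iterate_add_abs_sub (hf.1.mapsTo_iterate m hf.1.crit_mem) hm hj, iterate_add_apply]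

theorem iterate_fibS_add_preimDist (hf : IsFibonacciMap f c) (k : ℕ) :
    f^[fibS k] (c + δ k) = c := by
  obtain ⟨z, hz, hfz, hzd⟩ :=
    exists_abs_sub_eq_preimDist hf.1.1 hf.1.2.1 (hf.2.2.exists_preimage k)
  rw [← hzd, hf.iterate_add_abs_sub hz (hzd ▸ hf.preimDist_le_preimDist (Nat.zero_le k))
    (fibS_pos k).ne', hfz]

theorem iterate_fibS_of_abs_sub_eq (hf : IsFibonacciMap f c) {k : ℕ} {p : ℝ}
    (hp : p ∈ Icc (0 : ℝ) 1) (hpc : |p - c| = δ k) : f^[fibS k] p = c := by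
  rw [← hf.iterate_add_abs_sub hp (hpc ▸ hf.preimDist_le_preimDist (Nat.zero_le k))
    (fibS_pos k).ne', hpc, hf.iterate_fibS_add_preimDist]

theorem strictMonoOrAntiOn_iterate (hf : IsFibonacciMap f c) {j k : ℕ} (hj : j ≤ fibS (k + 1)) :
    StrictMonoOrAntiOn f^[j] (Icc c (c + δ k)) := by
  have hsub := hf.Icc_add_preimDist_subset k
  refine hf.1.strictMonoOrAntiOn_iterate hf.1.crit_mem.1
    (hsub ⟨le_add_of_nonneg_right (hf.preimDist_pos k).le, le_rfl⟩).2 fun i hi x hx hfx => ?_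
  rcases Nat.eq_zero_or_pos i with rfl | hi0
  · exact hx.1.ne' hfx
  · have := hf.2.2.preimDist_le_abs_sub hi0.ne' (hi.trans_le hj) (hsub (Ioo_subset_Icc_self hx)) hfx
    rw [abs_of_pos (sub_pos.2 hx.1)] at this
    linarith [hx.2]

theorem exists_iterate_fibS_add_eq (hf : IsFibonacciMap f c) {j k : ℕ} {a b : ℝ} (hca : c ≤ a)
    (hab : a ≤ b) (hb : b ≤ c + δ 0) (hjb : f^[j] b = c) (hja : δ k ≤ |f^[j] a - c|) :
    ∃ x ∈ Icc a b, f^[fibS k + j] x = c ∧ |f^[j] x - c| = δ k := by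
  have hsub : Icc a b ⊆ Icc 0 1 :=
    (Icc_subset_Icc hca hb).trans (hf.Icc_add_preimDist_subset 0)
  obtain ⟨x, hx, hxd⟩ := exists_mem_Icc_abs_sub_eq hab ((hf.1.continuousOn_iterate j).mono hsub)
    hjb (hf.preimDist_pos k).le hja
  refine ⟨x, hx, ?_, hxd⟩
  rw [iterate_add_apply, hf.iterate_fibS_of_abs_sub_eq (hf.1.mapsTo_iterate j (hsub hx)) hxd]

theorem abs_iterate_fibS_succ_add_preimDist_sub (hf : IsFibonacciMap f c) (k : ℕ) :
    |f^[fibS (k + 1)] (c + δ (k + 2)) - c| = δ k := by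
  have hmem : c + δ (k + 2) ∈ Icc c (c + δ (k + 1)) :=
    ⟨le_add_of_nonneg_right (hf.preimDist_pos _).le, by linarith [hf.preimDist_succ_lt (k + 1)]⟩
  have hpre : f^[fibS k] (f^[fibS (k + 1)] (c + δ (k + 2))) = c := by
    rw [← iterate_add_apply, ← fibS_add_two, hf.iterate_fibS_add_preimDist]
  refine le_antisymm ?_
    (preimDist_le (hf.1.mapsTo_iterate _ (hf.Icc_add_preimDist_subset _ hmem)) hpre)
  by_contra! hlt
  obtain ⟨x, hx, hfx, hxd⟩ := hf.exists_iterate_fibS_add_eq hmem.1 hmem.2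
    (by linarith [hf.preimDist_le_preimDist (Nat.zero_le (k + 1))])
    (hf.iterate_fibS_add_preimDist (k + 1)) hlt.le
  have hxe : x = c + δ (k + 2) := (hf.strictMonoOrAntiOn_iterate le_rfl).injOn
    ⟨hmem.1.trans hx.1, hx.2⟩ hmem
    (by rw [hf.iterate_fibS_add_preimDist (k + 2), fibS_add_two, hfx])
  rw [hxe] at hxd
  exact hlt.ne' hxd

theorem abs_iterate_fibS_add_two_sub_lt (hf : IsFibonacciMap f c) (k : ℕ) :
    |f^[fibS (k + 2)] c - c| < δ k := by
  by_contra! hle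
  have hδ := hf.preimDist_pos (k + 2)
  obtain ⟨x, hx, hfx, hxd⟩ := hf.exists_iterate_fibS_add_eq le_rfl (le_add_of_nonneg_right hδ.le)
    (by linarith [hf.preimDist_le_preimDist (Nat.zero_le (k + 2))])
    (hf.iterate_fibS_add_preimDist (k + 2)) hle
  have hrec := hf.2.2.preimDist_le_abs_sub (k := k + 2) (Nat.add_pos_left (fibS_pos k) _).ne'
    (show _ < fibS (k + 2) + fibS (k + 1) by linarith [fibS_lt_fibS_succ k])
    (hf.Icc_add_preimDist_subset _ hx) hfx
  rw [abs_of_nonneg (by linarith [hx.1])] at hrec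
  rw [show x = c + δ (k + 2) by linarith [hx.2], hf.iterate_fibS_add_preimDist, sub_self,
    abs_zero] at hxd
  exact (hf.preimDist_pos k).ne hxd

theorem abs_iterate_fibS_add_two_sub_le (hf : IsFibonacciMap f c) (k : ℕ) :
    |f^[fibS (k + 2)] c - c| ≤ δ 0 :=
  ((hf.abs_iterate_fibS_add_two_sub_lt k).trans_le (hf.preimDist_le_preimDist (Nat.zero_le k))).le

theorem preimDist_lt_abs_iterate_fibS_succ_sub (hf : IsFibonacciMap f c) (k : ℕ) :
    δ k < |f^[fibS (k + 1)] c - c| := by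
  rw [← hf.abs_iterate_fibS_succ_add_preimDist_sub k]
  exact (hf.strictMonoOrAntiOn_iterate (fibS_lt_fibS_succ _).le).abs_sub_lt
    (hf.iterate_fibS_add_preimDist (k + 1)) le_rfl (lt_add_of_pos_right c (hf.preimDist_pos _))
    (by linarith [hf.preimDist_succ_lt (k + 1)]) le_rfl

theorem abs_iterate_fibS_sub_le (hf : IsFibonacciMap f c) {a b : ℕ} (ha : a ≠ 0) (hab : a ≤ b) :
    |f^[fibS b] c - c| ≤ |f^[fibS a] c - c| := by
  induction b, hab using Nat.le_induction with
  | base => exact le_rfl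
  | succ b hab ih =>
    obtain ⟨b, rfl⟩ := Nat.exists_eq_succ_of_ne_zero (by omega : b ≠ 0)
    exact ((hf.abs_iterate_fibS_add_two_sub_lt b).trans
      (hf.preimDist_lt_abs_iterate_fibS_succ_sub b)).le.trans ih

theorem sign_iterate_fibS_succ_sub (hf : IsFibonacciMap f c) (k : ℕ) :
    SignType.sign (f^[fibS (k + 1)] c - c) =
      -SignType.sign (f^[fibS (k + 1)] (c + δ k) - c) := by
  rw [(hf.strictMonoOrAntiOn_iterate le_rfl).sign_sub_eq_neg (hf.iterate_fibS_add_preimDist (k + 1))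
    (lt_add_of_pos_right c (hf.preimDist_pos _)) (by linarith [hf.preimDist_succ_lt k]) le_rfl,
    neg_neg]

theorem sign_iterate_fibS_add_two_sub (hf : IsFibonacciMap f c) (k : ℕ) :
    SignType.sign (f^[fibS (k + 2)] c - c) = -SignType.sign (f^[fibS k] c - c) := by
  rw [hf.sign_iterate_fibS_succ_sub (k + 1), fibS_add_two k, iterate_add_apply,
    hf.iterate_fibS_add_preimDist]

theorem sign_iterate_fibS_sub (hf : IsFibonacciMap f c) :
    ∀ n, SignType.sign (f^[fibS n] c - c) = if n % 4 = 0 ∨ n % 4 = 3 then 1 else -1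
  | 0 => sign_pos (sub_pos.2 hf.crit_lt_apply)
  | 1 => by
    have h : f^[fibS (0 + 1)] (c + δ 0) = f c := congrArg f (hf.iterate_fibS_add_preimDist 0)
    rw [hf.sign_iterate_fibS_succ_sub 0, h, sign_pos (sub_pos.2 hf.crit_lt_apply)]
    rfl
  | n + 2 => by
    rw [hf.sign_iterate_fibS_add_two_sub, hf.sign_iterate_fibS_sub n]
    split_ifs <;> first | rfl | omega

theorem apply_add_preimDist_one (hf : IsFibonacciMap f c) : f (c + δ 1) = c + δ 0 := by
  obtain ⟨-, hmaps, -, -, -, -, hanti⟩ := hf.1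
  have hδ₁ := hf.preimDist_pos 1
  have hδ₁₀ : δ 1 < δ 0 := hf.preimDist_succ_lt 0
  have hsub := hf.Icc_add_preimDist_subset 0
  have h₀ : c + δ 0 ∈ Icc c 1 := ⟨by linarith, (hsub ⟨by linarith, le_rfl⟩).2⟩
  have h₁ : c + δ 1 ∈ Icc c 1 := ⟨by linarith, (hsub ⟨by linarith, by linarith⟩).2⟩
  have hf₀ : f (c + δ 0) = c := hf.iterate_fibS_add_preimDist 0
  have hgt : c < f (c + δ 1) := by
    have := hanti h₁ h₀ (by linarith)
    linarith
  exact hanti.injOn ⟨hgt.le, (hmaps (Icc_subset_Icc_left hf.1.crit_mem.1 h₁)).2⟩ h₀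
    ((hf.iterate_fibS_add_preimDist 1 : f (f (c + δ 1)) = c).trans hf₀.symm)

theorem iterate_fibS_zero_add_fibS_two_mem (hf : IsFibonacciMap f c) :
    f^[fibS 0 + fibS 2] c ∈ Ioo c (c + δ 0) := by
  obtain ⟨-, -, -, -, -, -, hanti⟩ := hf.1
  have ht₁ : δ 1 < |f^[fibS 2] c - c| := hf.preimDist_lt_abs_iterate_fibS_succ_sub 1
  have ht₀ : |f^[fibS 2] c - c| < δ 0 := hf.abs_iterate_fibS_add_two_sub_lt 0
  have hδ₁ := hf.preimDist_pos 1
  have hmem {x : ℝ} (h₀ : c ≤ x) (h₁ : x ≤ c + δ 0) : x ∈ Icc c 1 :=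
    ⟨h₀, (hf.Icc_add_preimDist_subset 0 ⟨h₀, h₁⟩).2⟩
  rw [← hf.iterate_add_abs_iterate_sub ht₀.le (fibS_pos 0).ne']
  constructor
  · calc c = f (c + δ 0) := (hf.iterate_fibS_add_preimDist 0).symm
      _ < f (c + |f^[fibS 2] c - c|) :=
        hanti (hmem (by linarith) (by linarith)) (hmem (by linarith) le_rfl) (by linarith)
  · calc f (c + |f^[fibS 2] c - c|) < f (c + δ 1) :=
        hanti (hmem (by linarith) (by linarith)) (hmem (by linarith) (by linarith)) (by linarith)
      _ = c + δ 0 := hf.apply_add_preimDist_one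

theorem preimDist_one_lt_abs_iterate_sub (hf : IsFibonacciMap f c) :
    δ 1 < |f^[fibS 0 + fibS 2] c - c| := by
  obtain ⟨-, -, -, -, -, -, hanti⟩ := hf.1
  obtain ⟨hX₀, hX₁⟩ := hf.iterate_fibS_zero_add_fibS_two_mem
  have h₃ : c < f^[fibS 3] c := by
    have := hf.sign_iterate_fibS_sub 3
    rwa [if_pos (by decide), sign_eq_one_iff, sub_pos] at this
  have h₃' : f^[fibS 3] c - c < δ 1 :=
    (le_abs_self _).trans_lt (hf.abs_iterate_fibS_add_two_sub_lt 1)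
  have hsub := hf.Icc_add_preimDist_subset 1
  -- `f^[S₁]` maps `c_{S₀ + S₂}` to `f c_{S₃}`, which lies beyond `f (c + δ 1) = c + δ 0`
  have hg : c < f^[fibS 1] (f^[fibS 0 + fibS 2] c) := by
    have : f (c + δ 1) < f (f^[fibS 3] c) :=
      hanti ⟨h₃.le, (hsub ⟨h₃.le, by linarith⟩).2⟩
        ⟨le_add_of_nonneg_right (hf.preimDist_pos 1).le, (hsub ⟨by linarith, le_rfl⟩).2⟩
        (by linarith)
    rw [hf.apply_add_preimDist_one] at this
    exact (by linarith [hf.preimDist_pos 0] : c < f (f^[fibS 3] c))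
  rw [abs_of_pos (sub_pos.2 hX₀), lt_sub_iff_add_lt']
  by_contra! hle
  rcases hle.lt_or_eq with hlt | heq
  · have := (hf.strictMonoOrAntiOn_iterate (k := 0) le_rfl).sign_sub_eq
      (hf.iterate_fibS_add_preimDist 1) hX₀.le hlt (by linarith [hf.preimDist_succ_lt 0])
    rw [hf.sign_iterate_fibS_sub 1, if_neg (by decide), sign_eq_neg_one_iff] at this
    linarith
  · rw [heq, hf.iterate_fibS_add_preimDist 1] at hg
    exact hg.false

theorem abs_iterate_fibS_add_two_lt_of_lt (hf : IsFibonacciMap f c) (n : ℕ)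
    (h : |f^[fibS (n + 4)] c - c| < |f^[fibS n + fibS (n + 2)] c - c|) :
    |f^[fibS (n + 2)] c - c| < |f^[fibS (n + 1) + fibS (n + 3)] c - c| := by
  have hX : |f^[fibS (n + 1) + fibS (n + 3)] c - c| < δ n := by
    rw [← hf.iterate_add_abs_iterate_sub (hf.abs_iterate_fibS_add_two_sub_le (n + 1))
      (fibS_pos _).ne', ← hf.abs_iterate_fibS_succ_add_preimDist_sub n]
    exact (hf.strictMonoOrAntiOn_iterate (fibS_lt_fibS_succ _).le).abs_sub_lt
      (hf.iterate_fibS_add_preimDist (n + 1))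
      (le_add_of_nonneg_right (hf.preimDist_pos _).le)
      (by linarith [hf.preimDist_lt_abs_iterate_fibS_succ_sub (n + 2)])
      (by linarith [hf.abs_iterate_fibS_add_two_sub_lt (n + 1)]) le_rfl
  -- `f^[S_n]` is monotone on `[c, c + δ n]` and maps `c + |c_{S_{n+2}} - c|` to `c_{S_n + S_{n+2}}`
  -- and `c + |c_{S_{n+1} + S_{n+3}} - c|` to `c_{S_{n+4}}`
  by_contra! hle
  refine h.not_ge ?_
  have hsum : fibS (n + 4) = fibS n + (fibS (n + 1) + fibS (n + 3)) := by
    simp only [fibS]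
    omega
  rw [← hf.iterate_add_abs_iterate_sub (hf.abs_iterate_fibS_add_two_sub_le n) (fibS_pos n).ne',
    hsum, ← hf.iterate_add_abs_iterate_sub
      (hX.le.trans (hf.preimDist_le_preimDist (Nat.zero_le n))) (fibS_pos n).ne']
  exact (hf.strictMonoOrAntiOn_iterate (fibS_lt_fibS_succ _).le).abs_sub_le
    (hf.iterate_fibS_add_preimDist n) (le_add_of_nonneg_right (abs_nonneg _)) (by linarith)
    (by linarith [hf.abs_iterate_fibS_add_two_sub_lt n]) le_rfl

theorem abs_iterate_fibS_add_four_lt (hf : IsFibonacciMap f c) :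
    ∀ n, |f^[fibS (n + 4)] c - c| < |f^[fibS n + fibS (n + 2)] c - c|
  | 0 => calc
      _ < δ 2 := hf.abs_iterate_fibS_add_two_sub_lt 2
      _ < δ 1 := hf.preimDist_succ_lt 1
      _ < _ := hf.preimDist_one_lt_abs_iterate_sub
  | n + 1 => calc
      _ < δ (n + 3) := hf.abs_iterate_fibS_add_two_sub_lt (n + 3)
      _ ≤ δ (n + 1) := hf.preimDist_le_preimDist (by omega)
      _ < |f^[fibS (n + 2)] c - c| := hf.preimDist_lt_abs_iterate_fibS_succ_sub (n + 1)
      _ < _ := hf.abs_iterate_fibS_add_two_lt_of_lt n (hf.abs_iterate_fibS_add_four_lt n)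

theorem abs_iterate_fibS_sub_lt (hf : IsFibonacciMap f c) {n n' : ℕ} (h : n < n')
    (h₀ : n = 0 → 3 ≤ n') : |f^[fibS n'] c - c| < |f^[fibS n + fibS (n + 2)] c - c| := by
  rcases n with _ | n
  · calc
      _ ≤ |f^[fibS 3] c - c| := hf.abs_iterate_fibS_sub_le (by norm_num) (h₀ rfl)
      _ < δ 1 := hf.abs_iterate_fibS_add_two_sub_lt 1
      _ < _ := hf.preimDist_one_lt_abs_iterate_sub
  · exact (hf.abs_iterate_fibS_sub_le (by omega) (by omega : n + 2 ≤ n')).trans_lt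
      (hf.abs_iterate_fibS_add_two_lt_of_lt n (hf.abs_iterate_fibS_add_four_lt n))

section Band

variable {n : ℕ} {s : ℝ}

theorem sign_iterate_fibS_add_sub (hf : IsFibonacciMap f c) (hs₀ : 0 ≤ s)
    (hs : s ≤ |f^[fibS (n + 2)] c - c|) :
    SignType.sign (f^[fibS n] (c + s) - c) = SignType.sign (f^[fibS n] c - c) :=
  (hf.strictMonoOrAntiOn_iterate (fibS_lt_fibS_succ _).le).sign_sub_eq
    (hf.iterate_fibS_add_preimDist n) (by linarith)
    (by linarith [hf.abs_iterate_fibS_add_two_sub_lt n]) le_rfl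

theorem abs_iterate_fibS_add_sub_le (hf : IsFibonacciMap f c) (hs₀ : 0 ≤ s)
    (hs : s ≤ |f^[fibS (n + 2)] c - c|) :
    |f^[fibS n] (c + s) - c| ≤ |f^[fibS n] c - c| :=
  (hf.strictMonoOrAntiOn_iterate (fibS_lt_fibS_succ _).le).abs_sub_le
    (hf.iterate_fibS_add_preimDist n) le_rfl (by linarith)
    (by linarith [hf.abs_iterate_fibS_add_two_sub_lt n]) le_rfl

theorem abs_iterate_fibS_add_fibS_sub_le (hf : IsFibonacciMap f c) (hs₀ : 0 ≤ s)
    (hs : s ≤ |f^[fibS (n + 2)] c - c|) :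
    |f^[fibS n + fibS (n + 2)] c - c| ≤ |f^[fibS n] (c + s) - c| := by
  rw [← hf.iterate_add_abs_iterate_sub (hf.abs_iterate_fibS_add_two_sub_le n) (fibS_pos n).ne']
  exact (hf.strictMonoOrAntiOn_iterate (fibS_lt_fibS_succ _).le).abs_sub_le
    (hf.iterate_fibS_add_preimDist n) (by linarith) (by linarith)
    (by linarith [hf.abs_iterate_fibS_add_two_sub_lt n]) le_rfl

end Band

theorem exists_iterate_sum_eq (hf : IsFibonacciMap f c) :
    ∀ {l : List ℕ} {n : ℕ}, l.IsChain (fun a b => a + 2 ≤ b) → l.head? = some n →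
      ∃ s, 0 ≤ s ∧ s ≤ |f^[fibS (n + 2)] c - c| ∧
        f^[(l.map fibS).sum] c = f^[fibS n] (c + s)
  | [], _, _, h => by simp at h
  | [_], _, _, h => ⟨0, le_rfl, abs_nonneg _, by cases h; simp⟩
  | n :: n₂ :: t, _, hl, h => by
    cases h
    obtain ⟨hgap, hl⟩ := List.isChain_cons_cons.mp hl
    obtain ⟨s, hs₀, hs, hm⟩ := hf.exists_iterate_sum_eq hl rfl
    have hup : |f^[((n₂ :: t).map fibS).sum] c - c| ≤ |f^[fibS (n + 2)] c - c| := by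
      rw [hm]
      exact (hf.abs_iterate_fibS_add_sub_le hs₀ hs).trans
        (hf.abs_iterate_fibS_sub_le (by omega) hgap)
    refine ⟨_, abs_nonneg _, hup, ?_⟩
    rw [List.map_cons, List.sum_cons, hf.iterate_add_abs_iterate_sub
      (hup.trans (hf.abs_iterate_fibS_add_two_sub_le n)) (fibS_pos n).ne']

theorem sign_iterate_sub (hf : IsFibonacciMap f c) {l : List ℕ} {m n : ℕ}
    (hl : IsFibExpansion l m) (hn : l.head? = some n) :
    SignType.sign (f^[m] c - c) = if n % 4 = 0 ∨ n % 4 = 3 then 1 else -1 := by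
  obtain ⟨s, hs₀, hs, hm⟩ := hf.exists_iterate_sum_eq hl.2.1 hn
  rw [← hl.2.2, hm, hf.sign_iterate_fibS_add_sub hs₀ hs, hf.sign_iterate_fibS_sub]

theorem abs_iterate_sub_lt (hf : IsFibonacciMap f c) {l l' : List ℕ} {m m' n n' : ℕ}
    (hl : IsFibExpansion l m) (hn : l.head? = some n)
    (hl' : IsFibExpansion l' m') (hn' : l'.head? = some n') (h : n < n')
    (h₀ : n = 0 → 3 ≤ n') : |f^[m'] c - c| < |f^[m] c - c| := by
  obtain ⟨s, hs₀, hs, hm⟩ := hf.exists_iterate_sum_eq hl.2.1 hn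
  obtain ⟨s', hs₀', hs', hm'⟩ := hf.exists_iterate_sum_eq hl'.2.1 hn'
  rw [← hl.2.2, ← hl'.2.2, hm, hm']
  calc
    _ ≤ |f^[fibS n'] c - c| := hf.abs_iterate_fibS_add_sub_le hs₀' hs'
    _ < |f^[fibS n + fibS (n + 2)] c - c| := hf.abs_iterate_fibS_sub_lt h h₀
    _ ≤ _ := hf.abs_iterate_fibS_add_fibS_sub_le hs₀ hs

end IsFibonacciMap

/-- Ordering of the forward critical orbit of a Fibonacci map according to the leading
summand `S_n` of the Fibonacci sum expression of the iterate index, read mod 4. -/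
theorem fibonacci_orbit_ordering_by_leading_summand (f : ℝ → ℝ) (c : ℝ)
    (hf : IsFibonacciMap f c) (m m' n n' : ℕ) (l l' : List ℕ)
    (hl : IsFibExpansion l m) (hn : l.head? = some n)
    (hl' : IsFibExpansion l' m') (hn' : l'.head? = some n') :
    ((n % 4 = 1 ∨ n % 4 = 2) → f^[m] c < c) ∧
    ((n % 4 = 0 ∨ n % 4 = 3) → c < f^[m] c) ∧
    (n < n' → (n % 4 = 1 ∨ n % 4 = 2) → (n' % 4 = 1 ∨ n' % 4 = 2) →
      f^[m] c < f^[m'] c ∧ f^[m'] c < c) ∧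
    (n < n' → (n % 4 = 0 ∨ n % 4 = 3) → (n' % 4 = 0 ∨ n' % 4 = 3) →
      c < f^[m'] c ∧ f^[m'] c < f^[m] c) := by
  have hσ := hf.sign_iterate_sub hl hn
  have hσ' := hf.sign_iterate_sub hl' hn'
  have hlt := hf.abs_iterate_sub_lt hl hn hl' hn'
  refine ⟨fun h => ?_, fun h => ?_, fun hnn' h h' => ?_, fun hnn' h h' => ?_⟩
  · rwa [if_neg (by omega), sign_eq_neg_one_iff, sub_neg] at hσ
  · rwa [if_pos h, sign_eq_one_iff, sub_pos] at hσ
  · rw [if_neg (by omega), sign_eq_neg_one_iff] at hσ hσ'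
    have := hlt hnn' (by omega)
    rw [abs_of_neg hσ, abs_of_neg hσ'] at this
    constructor <;> linarith
  · rw [if_pos h, sign_eq_one_iff] at hσ
    rw [if_pos h', sign_eq_one_iff] at hσ'
    have := hlt hnn' (by omega)
    rw [abs_of_pos hσ, abs_of_pos hσ'] at this
    constructor <;> linarith
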